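/- (Containment invariant) For every sentence W = w_1, …, w_n and every reachable configuration (σ, β, B, φ, A, O) of the Bubble-Hybrid transition system for W, the containment condition holds: for all bubbles α1, α2 ∈ B, if φ(α2) ⊊ φ(α1) then α2 is reachable from α1 via arcs in A (that is, α1 →* α2, where α → α' means (α, l, α') ∈ A for some label l). -/

import Mathlib

/-- Ground node set `V`: `none` is the dummy root `RT`,
`some i` represents the word `w_{i+1}` (0-indexed internally). -/
abbrev BNode (n : ℕ) := Option (Fin n)

/-- A parser configuration `(σ, β, B, φ, A, O)`.
The stack's top is the head of `stack`; the buffer's front is the head of `buffer`. -/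
structure Config (n : ℕ) (L : Type*) where
  stack : List ℕ
  buffer : List ℕ
  bubbles : Finset ℕ
  content : ℕ → Set (BNode n)
  arcs : Set (ℕ × L × ℕ)
  openB : Finset ℕ

/-- `α1 → α2`: there is an arc from `α1` to `α2` with some label. -/
def ArcRel {L : Type*} (arcs : Set (ℕ × L × ℕ)) (a b : ℕ) : Prop :=
  ∃ l, (a, l, b) ∈ arcs

/-- Projection `ψ(α)`: union of the contents of all bubbles reachable from `α`
(reflexive-transitive closure of the arc relation). -/
def projOf {n : ℕ} {L : Type*} (arcs : Set (ℕ × L × ℕ)) (φ : ℕ → Set (BNode n))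
    (α : ℕ) : Set (BNode n) :=
  {v | ∃ α', Relation.ReflTransGen (ArcRel arcs) α α' ∧ v ∈ φ α'}

/-- `ψ` of a configuration. -/
def Config.proj {n : ℕ} {L : Type*} (c : Config n L) (α : ℕ) : Set (BNode n) :=
  projOf c.arcs c.content α

/-- Initial configuration `c^i(W)`: bubble `0` is the singleton `{RT}`,
bubble `i` (for `1 ≤ i ≤ n`) is the singleton `{w_i}`. -/
def initConfig (n : ℕ) (L : Type*) : Config n L where
  stack := [0]
  buffer := (List.range n).map (· + 1)
  bubbles := Finset.range (n + 1)
  content := fun i =>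
    {v | (i = 0 ∧ v = none) ∨ ∃ k : Fin n, i = (k : ℕ) + 1 ∧ v = some k}
  arcs := ∅
  openB := ∅

/-- Terminal configuration: empty buffer, and the stack is the single bubble
with content `{RT}`. -/
def Terminal {n : ℕ} {L : Type*} (c : Config n L) : Prop :=
  c.buffer = [] ∧ ∃ r, c.stack = [r] ∧ c.content r = {(none : BNode n)}

/-- The Bubble-Hybrid transitions. -/
inductive Step {n : ℕ} {L : Type*} (conj : L) : Config n L → Config n L → Prop
  | shift (c : Config n L) (b1 : ℕ) (β : List ℕ)
      (hbuf : c.buffer = b1 :: β) :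
      Step conj c { c with stack := b1 :: c.stack, buffer := β }
  | leftArc (c : Config n L) (lbl : L) (s1 : ℕ) (σ : List ℕ) (b1 : ℕ) (β : List ℕ)
      (hstk : c.stack = s1 :: σ) (hbuf : c.buffer = b1 :: β)
      (hs1 : s1 ∉ c.openB) (hb1 : b1 ∉ c.openB)
      (hroot : c.content s1 ≠ {(none : BNode n)}) :
      Step conj c { c with stack := σ, arcs := insert (b1, lbl, s1) c.arcs }
  | rightArc (c : Config n L) (lbl : L) (s1 s2 : ℕ) (σ : List ℕ)
      (hstk : c.stack = s1 :: s2 :: σ)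
      (hs1 : s1 ∉ c.openB) (hs2 : s2 ∉ c.openB) :
      Step conj c { c with stack := s2 :: σ, arcs := insert (s2, lbl, s1) c.arcs }
  | bubbleOpen (c : Config n L) (lbl : L) (s1 s2 : ℕ) (σ : List ℕ) (α : ℕ)
      (hstk : c.stack = s1 :: s2 :: σ)
      (hs1 : s1 ∉ c.openB) (hs2 : s2 ∉ c.openB)
      (hroot : c.content s2 ≠ {(none : BNode n)})
      (hfresh : α ∉ c.bubbles) :
      Step conj c
        { stack := α :: σ
          buffer := c.buffer
          bubbles := insert α c.bubbles
          content := Function.update c.content α (c.proj s2 ∪ c.proj s1)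
          arcs := insert (α, conj, s2) (insert (α, lbl, s1) c.arcs)
          openB := insert α c.openB }
  | bubbleAttach (c : Config n L) (lbl : L) (s1 s2 : ℕ) (σ : List ℕ)
      (hstk : c.stack = s1 :: s2 :: σ)
      (hs1 : s1 ∉ c.openB) (hs2 : s2 ∈ c.openB) :
      Step conj c
        { c with
          stack := s2 :: σ
          content := Function.update c.content s2 (c.content s2 ∪ c.proj s1)
          arcs := insert (s2, lbl, s1) c.arcs }
  | bubbleClose (c : Config n L) (s1 : ℕ) (σ : List ℕ)
      (hstk : c.stack = s1 :: σ) (hs1 : s1 ∈ c.openB) :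
      Step conj c
        { c with stack := σ, buffer := s1 :: c.buffer, openB := c.openB.erase s1 }

/-- A configuration is reachable if it is obtained from the initial configuration
by a finite sequence of transitions. -/
def Reachable {n : ℕ} {L : Type*} (conj : L) (c : Config n L) : Prop :=
  Relation.ReflTransGen (Step conj) (initConfig n L) c

/-- `arcs` forms a directed tree on the bubble set `B`. -/
def IsTreeOn {L : Type*} (B : Finset ℕ) (arcs : Set (ℕ × L × ℕ)) : Prop :=
  (∀ a l b, (a, l, b) ∈ arcs → a ∈ B ∧ b ∈ B) ∧
  ∃ r ∈ B,
    (¬ ∃ p l, (p, l, r) ∈ arcs) ∧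
    (∀ b ∈ B, b ≠ r → ∃! pl : ℕ × L, (pl.1, pl.2, b) ∈ arcs) ∧
    (∀ b ∈ B, Relation.ReflTransGen (ArcRel arcs) r b)

/-- Well-formed bubble tree on a length-`n` sentence. -/
def WellFormed {L : Type*} (n : ℕ) (B : Finset ℕ) (φ : ℕ → Set (BNode n))
    (arcs : Set (ℕ × L × ℕ)) : Prop :=
  IsTreeOn B arcs ∧
  -- contents are nonempty
  (∀ α ∈ B, (φ α).Nonempty) ∧
  -- no partial overlap
  (∀ α1 ∈ B, ∀ α2 ∈ B, φ α1 ∩ φ α2 = ∅ ∨ φ α1 ⊆ φ α2 ∨ φ α2 ⊆ φ α1) ∧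
  -- non-duplication
  (∀ α1 ∈ B, ∀ α2 ∈ B, φ α1 = φ α2 → α1 = α2) ∧
  -- lexical coverage
  (∀ v : BNode n, ∃ α ∈ B, φ α = {v}) ∧
  -- roothood
  (∃ r ∈ B, φ r = {(none : BNode n)} ∧
    (∀ α ∈ B, (none : BNode n) ∈ φ α → α = r) ∧
    (¬ ∃ p l, (p, l, r) ∈ arcs) ∧
    (∀ b ∈ B, Relation.ReflTransGen (ArcRel arcs) r b)) ∧
  -- containment
  (∀ α1 ∈ B, ∀ α2 ∈ B, φ α2 ⊂ φ α1 → Relation.ReflTransGen (ArcRel arcs) α1 α2)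

/-- Projectivity conditions for a well-formed bubble tree. -/
def Projective {L : Type*} (n : ℕ) (B : Finset ℕ) (φ : ℕ → Set (BNode n))
    (arcs : Set (ℕ × L × ℕ)) : Prop :=
  -- continuous coverage
  (∀ α ∈ B, ∀ i j k : Fin n, i < k → k < j →
    some i ∈ φ α → some j ∈ φ α → some k ∈ φ α) ∧
  -- continuous projections
  (∀ α ∈ B, ∀ i j k : Fin n, i < k → k < j →
    some i ∈ projOf arcs φ α → some j ∈ projOf arcs φ α →
    some k ∈ projOf arcs φ α) ∧
  -- contained projections
  (∀ α1 ∈ B, ∀ α2 ∈ B, Relation.TransGen (ArcRel arcs) α1 α2 →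
    projOf arcs φ α2 ⊆ φ α1 ∨ projOf arcs φ α2 ∩ φ α1 = ∅)

section ContainmentProof

open Relation

variable {n : ℕ} {L : Type*}

theorem reach_mono {arcs arcs' : Set (ℕ × L × ℕ)} (h : arcs ⊆ arcs') {x y : ℕ}
    (hr : ReflTransGen (ArcRel arcs) x y) : ReflTransGen (ArcRel arcs') x y :=
  by
  induction hr with
  | refl => exact .refl
  | tail _ hab ih => obtain ⟨l, hl⟩ := hab; exact ih.tail ⟨l, h hl⟩

theorem content_subset_projOf (arcs : Set (ℕ × L × ℕ)) (φ : ℕ → Set (BNode n)) (x : ℕ) :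
    φ x ⊆ projOf arcs φ x := fun _ hv => ⟨x, .refl, hv⟩

theorem projOf_subset_of_reach {arcs : Set (ℕ × L × ℕ)} {φ : ℕ → Set (BNode n)} {x y : ℕ}
    (h : ReflTransGen (ArcRel arcs) x y) : projOf arcs φ y ⊆ projOf arcs φ x :=
  fun _ ⟨γ, hr, hv⟩ => ⟨γ, h.trans hr, hv⟩

theorem content_subset_projOf_of_reach {arcs : Set (ℕ × L × ℕ)} {φ : ℕ → Set (BNode n)}
    {x y : ℕ} (h : ReflTransGen (ArcRel arcs) x y) : φ y ⊆ projOf arcs φ x :=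
  (content_subset_projOf arcs φ y).trans (projOf_subset_of_reach h)

theorem projOf_mono_arcs {arcs arcs' : Set (ℕ × L × ℕ)} (h : arcs ⊆ arcs')
    (φ : ℕ → Set (BNode n)) (x : ℕ) : projOf arcs φ x ⊆ projOf arcs' φ x :=
  fun _ ⟨γ, hr, hv⟩ => ⟨γ, reach_mono h hr, hv⟩

/-- If every arc of `arcs'` not in `arcs` has source `h`, and no arc of `arcs'`
targets `h`, then reachability from `x ≠ h` in `arcs'` reduces to `arcs`,
and never reaches `h`. -/
theorem reach_avoid {arcs arcs' : Set (ℕ × L × ℕ)} {h : ℕ}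
    (H2 : ∀ a (l : L) b, (a, l, b) ∈ arcs' → (a, l, b) ∈ arcs ∨ a = h)
    (H3 : ∀ a (l : L), (a, l, h) ∉ arcs')
    {x γ : ℕ} (hr : ReflTransGen (ArcRel arcs') x γ) (hx : x ≠ h) :
    ReflTransGen (ArcRel arcs) x γ ∧ γ ≠ h := by
  revert hx
  induction hr using Relation.ReflTransGen.head_induction_on with
  | refl => exact fun hx => ⟨.refl, hx⟩
  | head h' hr ih =>
    rename_i a z
    intro hx
    obtain ⟨l, hl⟩ := h'
    rcases H2 _ _ _ hl with hold | hah
    · have hz : z ≠ h := fun he => H3 a l (he ▸ hl)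
      obtain ⟨hr', hγ⟩ := ih hz
      exact ⟨hr'.head ⟨l, hold⟩, hγ⟩
    · exact absurd hah hx

theorem proj_g1 {arcs arcs' : Set (ℕ × L × ℕ)} {φ φ' : ℕ → Set (BNode n)} {h : ℕ}
    (H1 : arcs ⊆ arcs')
    (H2 : ∀ a (l : L) b, (a, l, b) ∈ arcs' → (a, l, b) ∈ arcs ∨ a = h)
    (H3 : ∀ a (l : L), (a, l, h) ∉ arcs')
    (H4 : ∀ γ, γ ≠ h → φ' γ = φ γ)
    {x : ℕ} (hx : x ≠ h) : projOf arcs' φ' x = projOf arcs φ x := by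
  have H3o : ∀ a (l : L), (a, l, h) ∉ arcs := fun a l hl => H3 a l (H1 hl)
  ext v
  constructor
  · rintro ⟨γ, hr, hv⟩
    obtain ⟨hr', hγ⟩ := reach_avoid H2 H3 hr hx
    exact ⟨γ, hr', (H4 γ hγ) ▸ hv⟩
  · rintro ⟨γ, hr, hv⟩
    obtain ⟨-, hγ⟩ := reach_avoid (arcs := arcs) (fun a l b hb => Or.inl hb) H3o hr hx
    exact ⟨γ, reach_mono H1 hr, (H4 γ hγ).symm ▸ hv⟩

theorem proj_g2 {arcs arcs' : Set (ℕ × L × ℕ)} {φ φ' : ℕ → Set (BNode n)} {h : ℕ}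
    (H2 : ∀ a (l : L) b, (a, l, b) ∈ arcs' → (a, l, b) ∈ arcs ∨ a = h)
    (H3 : ∀ a (l : L), (a, l, h) ∉ arcs')
    (H4 : ∀ γ, γ ≠ h → φ' γ = φ γ)
    {v : BNode n} (hv : v ∈ projOf arcs' φ' h) :
    v ∈ φ' h ∨ ∃ (l : L) (z : ℕ), (h, l, z) ∈ arcs' ∧ v ∈ projOf arcs φ z := by
  obtain ⟨γ, hr, hvγ⟩ := hv
  rcases hr.cases_head with heq | ⟨z, ⟨l, hl⟩, hzγ⟩
  · subst heq; exact Or.inl hvγ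
  · have hz : z ≠ h := fun he => H3 h l (he ▸ hl)
    obtain ⟨hr', hγ⟩ := reach_avoid H2 H3 hzγ hz
    exact Or.inr ⟨l, z, hl, γ, hr', (H4 γ hγ) ▸ hvγ⟩

theorem proj_g3 {arcs arcs' : Set (ℕ × L × ℕ)} {φ φ' : ℕ → Set (BNode n)} {h : ℕ}
    (H1 : arcs ⊆ arcs')
    (H3 : ∀ a (l : L), (a, l, h) ∉ arcs')
    (H4 : ∀ γ, γ ≠ h → φ' γ = φ γ)
    {l : L} {z : ℕ} (hl : (h, l, z) ∈ arcs') :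
    projOf arcs φ z ⊆ projOf arcs' φ' h := by
  have H3o : ∀ a (l : L), (a, l, h) ∉ arcs := fun a l hl' => H3 a l (H1 hl')
  rintro v ⟨γ, hr, hv⟩
  have hz : z ≠ h := fun he => H3 h l (he ▸ hl)
  obtain ⟨-, hγ⟩ := reach_avoid (arcs := arcs) (fun a l b hb => Or.inl hb) H3o hr hz
  exact ⟨γ, ReflTransGen.head ⟨l, hl⟩ (reach_mono H1 hr), (H4 γ hγ).symm ▸ hv⟩

/-- The inductive invariant maintained by the Bubble-Hybrid system. -/
structure BHInv (c : Config n L) : Prop where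
  nodup : (c.stack ++ c.buffer).Nodup
  act_mem : ∀ x ∈ c.stack ++ c.buffer, x ∈ c.bubbles
  arcs_mem : ∀ a (l : L) b, (a, l, b) ∈ c.arcs → a ∈ c.bubbles ∧ b ∈ c.bubbles
  act_root : ∀ x ∈ c.stack ++ c.buffer, ∀ a (l : L), (a, l, x) ∉ c.arcs
  act_disj : ∀ x ∈ c.stack ++ c.buffer, ∀ y ∈ c.stack ++ c.buffer, x ≠ y →
    ∀ v, v ∈ c.proj x → v ∈ c.proj y → False
  covered : ∀ α ∈ c.bubbles, ∃ x ∈ c.stack ++ c.buffer,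
    Relation.ReflTransGen (ArcRel c.arcs) x α
  nonemp : ∀ α ∈ c.bubbles, (c.content α).Nonempty
  contain : ∀ α1 ∈ c.bubbles, ∀ α2 ∈ c.bubbles, c.content α2 ⊆ c.content α1 →
    Relation.ReflTransGen (ArcRel c.arcs) α1 α2
  openSub : ∀ α ∈ c.openB, α ∈ c.bubbles
  openProj : ∀ α ∈ c.openB, c.content α = c.proj α

theorem reach_empty {x y : ℕ} (h : Relation.ReflTransGen (ArcRel (∅ : Set (ℕ × L × ℕ))) x y) :
    x = y := by
  induction h with
  | refl => rfl
  | tail _ ha ih => obtain ⟨l, hl⟩ := ha; exact absurd hl (Set.notMem_empty _)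

theorem inv_init : BHInv (initConfig n L) := by
  have hdet : ∀ (i j : ℕ) (v : BNode n), v ∈ (initConfig n L).content i →
      v ∈ (initConfig n L).content j → i = j := by
    intro i j v hi hj
    simp only [initConfig, Set.mem_setOf_eq] at hi hj
    rcases hi with ⟨hi0, rfl⟩ | ⟨k, hik, rfl⟩
    · rcases hj with ⟨hj0, -⟩ | ⟨k', hjk, hk⟩
      · omega
      · exact absurd hk (by simp)
    · rcases hj with ⟨hj0, hk⟩ | ⟨k', hjk, hk⟩
      · exact absurd hk (by simp)
      · rw [hik, hjk, Option.some_inj.mp hk]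
  have hproj : ∀ x, (initConfig n L).proj x = (initConfig n L).content x := by
    intro x; ext v; constructor
    · rintro ⟨γ, hr, hv⟩; rwa [reach_empty hr]
    · intro hv; exact ⟨x, .refl, hv⟩
  have hnon : ∀ α ∈ (initConfig n L).bubbles, ((initConfig n L).content α).Nonempty := by
    intro α hα
    have hα' : α < n + 1 := by simpa [initConfig, Finset.mem_range] using hα
    rcases Nat.eq_zero_or_pos α with rfl | hpos
    · exact ⟨none, Or.inl ⟨rfl, rfl⟩⟩
    · exact ⟨some ⟨α - 1, by omega⟩, Or.inr ⟨⟨α - 1, by omega⟩, by simp only [Fin.val_mk]; omega, rfl⟩⟩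
  have hact : ∀ x, x ∈ (initConfig n L).stack ++ (initConfig n L).buffer ↔ x < n + 1 := by
    intro x
    simp only [initConfig, List.mem_append, List.mem_cons, List.mem_singleton,
      List.mem_map, List.mem_range, List.not_mem_nil, or_false]
    constructor
    · rintro (rfl | ⟨a, ha, rfl⟩) <;> omega
    · intro hx
      rcases Nat.eq_zero_or_pos x with rfl | hpos
      · exact Or.inl rfl
      · exact Or.inr ⟨x - 1, by omega, by omega⟩
  constructor
  · -- nodup
    show (([0] : List ℕ) ++ (List.range n).map (· + 1)).Nodup
    simp only [List.singleton_append, List.nodup_cons]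
    constructor
    · simp
    · exact (List.nodup_range : (List.range n).Nodup).map (fun a b h => by omega)
  · -- act_mem
    intro x hx
    simpa [initConfig, Finset.mem_range] using (hact x).mp hx
  · -- arcs_mem
    intro a l b hab; exact absurd hab (Set.notMem_empty _)
  · -- act_root
    intro x _ a l hab; exact absurd hab (Set.notMem_empty _)
  · -- act_disj
    intro x _ y _ hxy v hvx hvy
    rw [hproj] at hvx hvy
    exact hxy (hdet x y v hvx hvy)
  · -- covered
    intro α hα
    refine ⟨α, ?_, .refl⟩
    rw [hact]
    simpa [initConfig, Finset.mem_range] using hα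
  · -- nonemp
    exact hnon
  · -- contain
    intro α1 h1 α2 h2 hsub
    obtain ⟨v, hv⟩ := hnon α2 h2
    have := hdet α1 α2 v (hsub hv) hv
    subst this
    exact .refl
  · -- openSub
    intro α hα; exact absurd hα (Finset.notMem_empty _)
  · -- openProj
    intro α hα; exact absurd hα (Finset.notMem_empty _)

theorem inv_perm {c c' : Config n L}
    (harcs : c'.arcs = c.arcs) (hcont : c'.content = c.content)
    (hbub : c'.bubbles = c.bubbles) (hopen : ∀ a ∈ c'.openB, a ∈ c.openB)
    (hperm : (c'.stack ++ c'.buffer).Perm (c.stack ++ c.buffer))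
    (hi : BHInv c) : BHInv c' := by
  have hproj : ∀ x, c'.proj x = c.proj x := by
    intro x; show projOf c'.arcs c'.content x = projOf c.arcs c.content x
    rw [harcs, hcont]
  constructor
  · exact hperm.symm.nodup hi.nodup
  · intro x hx; rw [hbub]; exact hi.act_mem x (hperm.subset hx)
  · intro a l b h; rw [harcs] at h; rw [hbub]; exact hi.arcs_mem a l b h
  · intro x hx a l hC; rw [harcs] at hC; exact hi.act_root x (hperm.subset hx) a l hC
  · intro x hx y hy hxy v hvx hvy
    rw [hproj] at hvx hvy
    exact hi.act_disj x (hperm.subset hx) y (hperm.subset hy) hxy v hvx hvy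
  · intro α hα; rw [hbub] at hα
    obtain ⟨x, hx, hr⟩ := hi.covered α hα
    exact ⟨x, hperm.mem_iff.mpr hx, by rw [harcs]; exact hr⟩
  · intro α hα; rw [hbub] at hα; rw [hcont]; exact hi.nonemp α hα
  · intro α1 h1 α2 h2 hsub
    rw [hbub] at h1 h2; rw [hcont] at hsub; rw [harcs]
    exact hi.contain α1 h1 α2 h2 hsub
  · intro α hα; rw [hbub]; exact hi.openSub α (hopen α hα)
  · intro α hα; rw [hcont, hproj]; exact hi.openProj α (hopen α hα)

theorem inv_arc {c c' : Config n L} {hd tl : ℕ} {lbl : L}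
    (harcs : c'.arcs = insert (hd, lbl, tl) c.arcs)
    (hcont : c'.content = c.content)
    (hbub : c'.bubbles = c.bubbles)
    (hopen : c'.openB = c.openB)
    (hdO : hd ∉ c.openB)
    (hact : ∀ x, x ∈ c.stack ++ c.buffer ↔ x = tl ∨ x ∈ c'.stack ++ c'.buffer)
    (hnd : (c'.stack ++ c'.buffer).Nodup)
    (htl : tl ∉ c'.stack ++ c'.buffer)
    (hhd : hd ∈ c'.stack ++ c'.buffer)
    (hi : BHInv c) : BHInv c' := by
  have htl_old : tl ∈ c.stack ++ c.buffer := (hact tl).mpr (Or.inl rfl)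
  have hhd_old : hd ∈ c.stack ++ c.buffer := (hact hd).mpr (Or.inr hhd)
  have hne : hd ≠ tl := fun he => htl (he ▸ hhd)
  have H1 : c.arcs ⊆ c'.arcs := harcs ▸ Set.subset_insert _ _
  have H2 : ∀ a (l : L) b, (a, l, b) ∈ c'.arcs → (a, l, b) ∈ c.arcs ∨ a = hd := by
    intro a l b h; rw [harcs] at h
    rcases Set.mem_insert_iff.mp h with he | hold
    · simp only [Prod.mk.injEq] at he; exact Or.inr he.1
    · exact Or.inl hold
  have H3 : ∀ a (l : L), (a, l, hd) ∉ c'.arcs := by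
    intro a l h; rw [harcs] at h
    rcases Set.mem_insert_iff.mp h with he | hold
    · simp only [Prod.mk.injEq] at he; exact hne he.2.2
    · exact hi.act_root hd hhd_old a l hold
  have H4 : ∀ γ, γ ≠ hd → c'.content γ = c.content γ := fun γ _ => by rw [hcont]
  have hprojne : ∀ x, x ≠ hd → c'.proj x = c.proj x := fun x hx =>
    proj_g1 H1 H2 H3 H4 hx
  have hmemnew : (hd, lbl, tl) ∈ c'.arcs := by rw [harcs]; exact Set.mem_insert _ _
  have hprojhd : c'.proj hd = c.proj hd ∪ c.proj tl := by
    apply Set.Subset.antisymm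
    · intro v hv
      rcases proj_g2 H2 H3 H4 hv with hφ | ⟨l, z, hz, hvz⟩
      · rw [hcont] at hφ
        exact Or.inl (content_subset_projOf _ _ _ hφ)
      · rw [harcs] at hz
        rcases Set.mem_insert_iff.mp hz with he | hold
        · simp only [Prod.mk.injEq] at he
          obtain ⟨-, -, rfl⟩ := he
          exact Or.inr hvz
        · exact Or.inl (projOf_subset_of_reach (ReflTransGen.single ⟨l, hold⟩) hvz)
    · apply Set.union_subset
      · show c.proj hd ⊆ projOf c'.arcs c'.content hd
        rw [hcont]
        exact projOf_mono_arcs H1 _ _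
      · exact proj_g3 H1 H3 H4 hmemnew
  constructor
  · exact hnd
  · intro x hx; rw [hbub]; exact hi.act_mem x ((hact x).mpr (Or.inr hx))
  · intro a l b h; rw [harcs] at h; rw [hbub]
    rcases Set.mem_insert_iff.mp h with he | hold
    · simp only [Prod.mk.injEq] at he
      rw [he.1, he.2.2]
      exact ⟨hi.act_mem hd hhd_old, hi.act_mem tl htl_old⟩
    · exact hi.arcs_mem a l b hold
  · intro x hx a l hC; rw [harcs] at hC
    rcases Set.mem_insert_iff.mp hC with he | hold
    · simp only [Prod.mk.injEq] at he
      obtain ⟨-, -, he⟩ := he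
      exact htl (he ▸ hx)
    · exact hi.act_root x ((hact x).mpr (Or.inr hx)) a l hold
  · intro x hx y hy hxy v hvx hvy
    have hxold := (hact x).mpr (Or.inr hx)
    have hyold := (hact y).mpr (Or.inr hy)
    have hxs : x ≠ tl := fun he => htl (he ▸ hx)
    have hys : y ≠ tl := fun he => htl (he ▸ hy)
    by_cases hxh : x = hd
    · subst hxh
      rw [hprojhd] at hvx
      rw [hprojne y (fun he => hxy he.symm)] at hvy
      rcases hvx with hvx | hvx
      · exact hi.act_disj x hxold y hyold hxy v hvx hvy
      · exact hi.act_disj tl htl_old y hyold (fun he => hys he.symm) v hvx hvy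
    · rw [hprojne x hxh] at hvx
      by_cases hyh : y = hd
      · subst hyh
        rw [hprojhd] at hvy
        rcases hvy with hvy | hvy
        · exact hi.act_disj x hxold y hyold hxy v hvx hvy
        · exact hi.act_disj x hxold tl htl_old hxs v hvx hvy
      · rw [hprojne y hyh] at hvy
        exact hi.act_disj x hxold y hyold hxy v hvx hvy
  · intro α hα
    rw [hbub] at hα
    obtain ⟨x, hx, hr⟩ := hi.covered α hα
    rcases (hact x).mp hx with rfl | hx'
    · exact ⟨hd, hhd, ReflTransGen.head ⟨lbl, hmemnew⟩ (reach_mono H1 hr)⟩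
    · exact ⟨x, hx', reach_mono H1 hr⟩
  · intro α hα; rw [hbub] at hα; rw [hcont]; exact hi.nonemp α hα
  · intro α1 h1 α2 h2 hsub
    rw [hbub] at h1 h2; rw [hcont] at hsub
    exact reach_mono H1 (hi.contain α1 h1 α2 h2 hsub)
  · intro α hα; rw [hopen] at hα; rw [hbub]; exact hi.openSub α hα
  · intro α hα; rw [hopen] at hα
    have hαh : α ≠ hd := fun he => hdO (he ▸ hα)
    rw [hcont, hprojne α hαh]
    exact hi.openProj α hα

theorem inv_step {conj : L} {c c' : Config n L} (hs : Step conj c c') (hi : BHInv c) :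
    BHInv c' := by
  cases hs with
  | shift b1 β hbuf =>
    refine inv_perm (c := c) rfl rfl rfl (fun a ha => ha) ?_ hi
    show ((b1 :: c.stack) ++ β).Perm (c.stack ++ c.buffer)
    rw [hbuf]
    exact List.perm_middle.symm
  | bubbleClose s1 σ hstk hs1 =>
    refine inv_perm (c := c) rfl rfl rfl (fun a ha => Finset.mem_of_mem_erase ha) ?_ hi
    show (σ ++ s1 :: c.buffer).Perm (c.stack ++ c.buffer)
    rw [hstk]
    exact List.perm_middle
  | leftArc lbl s1 σ b1 β hstk hbuf hs1 hb1 hroot =>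
    have hnd0 : (s1 :: (σ ++ c.buffer)).Nodup := by
      have := hi.nodup; rw [hstk] at this; exact this
    refine inv_arc (c := c) rfl rfl rfl rfl hb1 ?_ (List.nodup_cons.mp hnd0).2
      (List.nodup_cons.mp hnd0).1 ?_ hi
    · intro x
      show x ∈ c.stack ++ c.buffer ↔ x = s1 ∨ x ∈ σ ++ c.buffer
      rw [hstk]
      simp [List.mem_append, List.mem_cons]
    · show b1 ∈ σ ++ c.buffer
      rw [hbuf]
      exact List.mem_append.mpr (Or.inr (List.mem_cons_self))
  | rightArc lbl s1 s2 σ hstk hs1 hs2 =>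
    have hnd0 : (s1 :: ((s2 :: σ) ++ c.buffer)).Nodup := by
      have := hi.nodup; rw [hstk] at this; exact this
    refine inv_arc (c := c) rfl rfl rfl rfl hs2 ?_ (List.nodup_cons.mp hnd0).2
      (List.nodup_cons.mp hnd0).1 ?_ hi
    · intro x
      show x ∈ c.stack ++ c.buffer ↔ x = s1 ∨ x ∈ (s2 :: σ) ++ c.buffer
      rw [hstk]
      simp [List.mem_append, List.mem_cons]
    · show s2 ∈ (s2 :: σ) ++ c.buffer
      exact List.mem_append.mpr (Or.inl (List.mem_cons_self))
  | bubbleOpen lbl s1 s2 σ α hstk hs1 hs2 hroot hfresh =>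
    set c' : Config n L :=
      { stack := α :: σ
        buffer := c.buffer
        bubbles := insert α c.bubbles
        content := Function.update c.content α (c.proj s2 ∪ c.proj s1)
        arcs := insert (α, conj, s2) (insert (α, lbl, s1) c.arcs)
        openB := insert α c.openB } with hc'
    show BHInv c'
    have hnd0 : (s1 :: ((s2 :: σ) ++ c.buffer)).Nodup := by
      have := hi.nodup; rw [hstk] at this; exact this
    have hnd1 : ((s2 :: σ) ++ c.buffer).Nodup := (List.nodup_cons.mp hnd0).2
    have hs1n : s1 ∉ (s2 :: σ) ++ c.buffer := (List.nodup_cons.mp hnd0).1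
    have hnd2 : (σ ++ c.buffer).Nodup := (List.nodup_cons.mp hnd1).2
    have hs2n : s2 ∉ σ ++ c.buffer := (List.nodup_cons.mp hnd1).1
    have hs1n2 : s1 ∉ σ ++ c.buffer := fun h => hs1n (List.mem_cons_of_mem _ h)
    have hactold : ∀ x, x ∈ c.stack ++ c.buffer ↔ x = s1 ∨ x = s2 ∨ x ∈ σ ++ c.buffer := by
      intro x; rw [hstk]; simp [List.mem_append, List.mem_cons, or_assoc]
    have hs1old : s1 ∈ c.stack ++ c.buffer := (hactold s1).mpr (Or.inl rfl)
    have hs2old : s2 ∈ c.stack ++ c.buffer := (hactold s2).mpr (Or.inr (Or.inl rfl))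
    have hs1B : s1 ∈ c.bubbles := hi.act_mem s1 hs1old
    have hs2B : s2 ∈ c.bubbles := hi.act_mem s2 hs2old
    have hs12 : s1 ≠ s2 := fun he => hs1n (he ▸ List.mem_cons_self)
    have hαs1 : s1 ≠ α := fun he => hfresh (he ▸ hs1B)
    have hαs2 : s2 ≠ α := fun he => hfresh (he ▸ hs2B)
    have hαact : α ∉ σ ++ c.buffer := fun h =>
      hfresh (hi.act_mem α ((hactold α).mpr (Or.inr (Or.inr h))))
    have H1 : c.arcs ⊆ c'.arcs := by
      intro x hx
      exact Set.mem_insert_iff.mpr (Or.inr (Set.mem_insert_iff.mpr (Or.inr hx)))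
    have hm1 : (α, lbl, s1) ∈ c'.arcs :=
      Set.mem_insert_iff.mpr (Or.inr (Set.mem_insert _ _))
    have hm2 : (α, conj, s2) ∈ c'.arcs := Set.mem_insert _ _
    have H2 : ∀ a (l : L) b, (a, l, b) ∈ c'.arcs → (a, l, b) ∈ c.arcs ∨ a = α := by
      intro a l b h
      rcases Set.mem_insert_iff.mp h with he | h
      · simp only [Prod.mk.injEq] at he; exact Or.inr he.1
      rcases Set.mem_insert_iff.mp h with he | h
      · simp only [Prod.mk.injEq] at he; exact Or.inr he.1
      · exact Or.inl h
    have H3 : ∀ a (l : L), (a, l, α) ∉ c'.arcs := by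
      intro a l h
      rcases Set.mem_insert_iff.mp h with he | h
      · simp only [Prod.mk.injEq] at he; exact hαs2 he.2.2.symm
      rcases Set.mem_insert_iff.mp h with he | h
      · simp only [Prod.mk.injEq] at he; exact hαs1 he.2.2.symm
      · exact hfresh (hi.arcs_mem a l α h).2
    have H4 : ∀ γ, γ ≠ α → c'.content γ = c.content γ := fun γ hγ =>
      Function.update_of_ne hγ _ _
    have hφα : c'.content α = c.proj s2 ∪ c.proj s1 := Function.update_self _ _ _
    have hprojne : ∀ x, x ≠ α → c'.proj x = c.proj x := fun x hx =>
      proj_g1 H1 H2 H3 H4 hx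
    have hprojα : c'.proj α = c.proj s2 ∪ c.proj s1 := by
      apply Set.Subset.antisymm
      · intro v hv
        rcases proj_g2 H2 H3 H4 hv with hφ | ⟨l, z, hz, hvz⟩
        · rwa [hφα] at hφ
        · rcases Set.mem_insert_iff.mp hz with he | hz
          · simp only [Prod.mk.injEq] at he
            rw [he.2.2] at hvz; exact Or.inl hvz
          rcases Set.mem_insert_iff.mp hz with he | hz
          · simp only [Prod.mk.injEq] at he
            rw [he.2.2] at hvz; exact Or.inr hvz
          · exact absurd (hi.arcs_mem α l z hz).1 hfresh
      · rw [← hφα]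
        exact content_subset_projOf _ _ _
    constructor
    · exact List.nodup_cons.mpr ⟨hαact, hnd2⟩
    · intro x hx
      rcases List.mem_cons.mp hx with h | h
      · rw [h]; exact Finset.mem_insert_self _ _
      · exact Finset.mem_insert.mpr
          (Or.inr (hi.act_mem x ((hactold x).mpr (Or.inr (Or.inr h)))))
    · intro a l b h
      rcases Set.mem_insert_iff.mp h with he | h
      · simp only [Prod.mk.injEq] at he
        rw [he.1, he.2.2]
        exact ⟨Finset.mem_insert_self _ _, Finset.mem_insert.mpr (Or.inr hs2B)⟩
      rcases Set.mem_insert_iff.mp h with he | h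
      · simp only [Prod.mk.injEq] at he
        rw [he.1, he.2.2]
        exact ⟨Finset.mem_insert_self _ _, Finset.mem_insert.mpr (Or.inr hs1B)⟩
      · have := hi.arcs_mem a l b h
        exact ⟨Finset.mem_insert.mpr (Or.inr this.1), Finset.mem_insert.mpr (Or.inr this.2)⟩
    · intro x hx a l hC
      rcases Set.mem_insert_iff.mp hC with he | hC
      · simp only [Prod.mk.injEq] at he
        rw [he.2.2] at hx
        rcases List.mem_cons.mp hx with h | h
        · exact hαs2 h
        · exact hs2n h
      rcases Set.mem_insert_iff.mp hC with he | hC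
      · simp only [Prod.mk.injEq] at he
        rw [he.2.2] at hx
        rcases List.mem_cons.mp hx with h | h
        · exact hαs1 h
        · exact hs1n2 h
      · rcases List.mem_cons.mp hx with h | h
        · rw [h] at hC
          exact hfresh (hi.arcs_mem a l α hC).2
        · exact hi.act_root x ((hactold x).mpr (Or.inr (Or.inr h))) a l hC
    · intro x hx y hy hxy v hvx hvy
      rcases List.mem_cons.mp hx with hxα | hx'
      · rcases List.mem_cons.mp hy with hyα | hy'
        · exact hxy (hxα.trans hyα.symm)
        · have hyold := (hactold y).mpr (Or.inr (Or.inr hy'))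
          have hys1 : y ≠ s1 := fun he => hs1n2 (he ▸ hy')
          have hys2 : y ≠ s2 := fun he => hs2n (he ▸ hy')
          have hyα' : y ≠ α := fun he => hαact (he ▸ hy')
          rw [hxα, hprojα] at hvx
          rw [hprojne y hyα'] at hvy
          rcases hvx with hvx | hvx
          · exact hi.act_disj s2 hs2old y hyold (fun he => hys2 he.symm) v hvx hvy
          · exact hi.act_disj s1 hs1old y hyold (fun he => hys1 he.symm) v hvx hvy
      · have hxold := (hactold x).mpr (Or.inr (Or.inr hx'))
        have hxs1 : x ≠ s1 := fun he => hs1n2 (he ▸ hx')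
        have hxs2 : x ≠ s2 := fun he => hs2n (he ▸ hx')
        have hxα' : x ≠ α := fun he => hαact (he ▸ hx')
        rw [hprojne x hxα'] at hvx
        rcases List.mem_cons.mp hy with hyα | hy'
        · rw [hyα, hprojα] at hvy
          rcases hvy with hvy | hvy
          · exact hi.act_disj x hxold s2 hs2old hxs2 v hvx hvy
          · exact hi.act_disj x hxold s1 hs1old hxs1 v hvx hvy
        · have hyold := (hactold y).mpr (Or.inr (Or.inr hy'))
          rw [hprojne y (fun he => hαact (he ▸ hy'))] at hvy
          exact hi.act_disj x hxold y hyold hxy v hvx hvy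
    · intro γ hγ
      rcases Finset.mem_insert.mp hγ with h | hγB
      · exact ⟨α, List.mem_cons_self, by rw [h]⟩
      · obtain ⟨x, hx, hr⟩ := hi.covered γ hγB
        rcases (hactold x).mp hx with h | hx
        · rw [h] at hr
          exact ⟨α, List.mem_cons_self, ReflTransGen.head ⟨lbl, hm1⟩ (reach_mono H1 hr)⟩
        rcases hx with h | hx
        · rw [h] at hr
          exact ⟨α, List.mem_cons_self, ReflTransGen.head ⟨conj, hm2⟩ (reach_mono H1 hr)⟩
        · exact ⟨x, List.mem_cons_of_mem _ hx, reach_mono H1 hr⟩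
    · intro γ hγ
      rcases Finset.mem_insert.mp hγ with h | hγB
      · obtain ⟨v, hv⟩ := hi.nonemp s2 hs2B
        exact ⟨v, by rw [h, hφα]; exact Or.inl (content_subset_projOf _ _ _ hv)⟩
      · rw [H4 γ (fun he => hfresh (he ▸ hγB))]
        exact hi.nonemp γ hγB
    · intro α1 h1 α2 h2 hsub
      rcases Finset.mem_insert.mp h1 with h1e | h1B
      · rcases Finset.mem_insert.mp h2 with h2e | h2B
        · rw [h1e, h2e]
        · have hα2ne : α2 ≠ α := fun he => hfresh (he ▸ h2B)
          rw [h1e]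
          rw [h1e, hφα, H4 α2 hα2ne] at hsub
          obtain ⟨x, hx, hr⟩ := hi.covered α2 h2B
          obtain ⟨v, hv⟩ := hi.nonemp α2 h2B
          have hvx : v ∈ c.proj x := content_subset_projOf_of_reach hr hv
          rcases hsub hv with hvs | hvs
          · have hxeq : x = s2 := by
              by_contra hne'
              exact hi.act_disj x hx s2 hs2old hne' v hvx hvs
            rw [hxeq] at hr
            exact ReflTransGen.head ⟨conj, hm2⟩ (reach_mono H1 hr)
          · have hxeq : x = s1 := by
              by_contra hne'
              exact hi.act_disj x hx s1 hs1old hne' v hvx hvs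
            rw [hxeq] at hr
            exact ReflTransGen.head ⟨lbl, hm1⟩ (reach_mono H1 hr)
      · rcases Finset.mem_insert.mp h2 with h2e | h2B
        · exfalso
          have hα1ne : α1 ≠ α := fun he => hfresh (he ▸ h1B)
          rw [h2e, hφα, H4 α1 hα1ne] at hsub
          have hr2 : Relation.ReflTransGen (ArcRel c.arcs) α1 s2 :=
            hi.contain α1 h1B s2 hs2B
              ((content_subset_projOf c.arcs c.content s2).trans
                (fun v hv => hsub (Or.inl hv)))
          have hr1 : Relation.ReflTransGen (ArcRel c.arcs) α1 s1 :=
            hi.contain α1 h1B s1 hs1B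
              ((content_subset_projOf c.arcs c.content s1).trans
                (fun v hv => hsub (Or.inr hv)))
          rcases hr2.cases_tail with he2 | ⟨m, -, l2, harc2⟩
          · rcases hr1.cases_tail with he1 | ⟨m, -, l1, harc1⟩
            · exact hs12 (he1.trans he2.symm)
            · exact hi.act_root s1 hs1old m l1 harc1
          · exact hi.act_root s2 hs2old m l2 harc2
        · have hα1ne : α1 ≠ α := fun he => hfresh (he ▸ h1B)
          have hα2ne : α2 ≠ α := fun he => hfresh (he ▸ h2B)
          rw [H4 α1 hα1ne, H4 α2 hα2ne] at hsub
          exact reach_mono H1 (hi.contain α1 h1B α2 h2B hsub)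
    · intro γ hγ
      rcases Finset.mem_insert.mp hγ with h | hγO
      · rw [h]; exact Finset.mem_insert_self _ _
      · exact Finset.mem_insert.mpr (Or.inr (hi.openSub γ hγO))
    · intro γ hγ
      rcases Finset.mem_insert.mp hγ with h | hγO
      · rw [h, hφα, hprojα]
      · have hγne : γ ≠ α := fun he => hfresh (he ▸ hi.openSub γ hγO)
        rw [H4 γ hγne, hprojne γ hγne]
        exact hi.openProj γ hγO
  | bubbleAttach lbl s1 s2 σ hstk hs1 hs2 =>
    set c' : Config n L :=
      { c with
        stack := s2 :: σ
        content := Function.update c.content s2 (c.content s2 ∪ c.proj s1)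
        arcs := insert (s2, lbl, s1) c.arcs } with hc'
    show BHInv c'
    have harcs : c'.arcs = insert (s2, lbl, s1) c.arcs := rfl
    have hnd0 : (s1 :: ((s2 :: σ) ++ c.buffer)).Nodup := by
      have := hi.nodup; rw [hstk] at this; exact this
    have hnd' : ((s2 :: σ) ++ c.buffer).Nodup := (List.nodup_cons.mp hnd0).2
    have hs1new : s1 ∉ (s2 :: σ) ++ c.buffer := (List.nodup_cons.mp hnd0).1
    have hs1old : s1 ∈ c.stack ++ c.buffer := by
      rw [hstk]; exact List.mem_append.mpr (Or.inl (List.mem_cons_self))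
    have hs2new : s2 ∈ (s2 :: σ) ++ c.buffer :=
      List.mem_append.mpr (Or.inl (List.mem_cons_self))
    have hact : ∀ x, x ∈ c.stack ++ c.buffer ↔ x = s1 ∨ x ∈ (s2 :: σ) ++ c.buffer := by
      intro x; rw [hstk]; simp [List.mem_append, List.mem_cons]
    have hs2old : s2 ∈ c.stack ++ c.buffer := (hact s2).mpr (Or.inr hs2new)
    have hne : s2 ≠ s1 := fun he => hs1new (he ▸ hs2new)
    have hs2B : s2 ∈ c.bubbles := hi.act_mem s2 hs2old
    have hs1B : s1 ∈ c.bubbles := hi.act_mem s1 hs1old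
    have H1 : c.arcs ⊆ c'.arcs := Set.subset_insert _ _
    have H2 : ∀ a (l : L) b, (a, l, b) ∈ c'.arcs → (a, l, b) ∈ c.arcs ∨ a = s2 := by
      intro a l b h
      rcases Set.mem_insert_iff.mp h with he | hold
      · simp only [Prod.mk.injEq] at he; exact Or.inr he.1
      · exact Or.inl hold
    have H3 : ∀ a (l : L), (a, l, s2) ∉ c'.arcs := by
      intro a l h
      rcases Set.mem_insert_iff.mp h with he | hold
      · simp only [Prod.mk.injEq] at he; exact hne he.2.2
      · exact hi.act_root s2 hs2old a l hold
    have H4 : ∀ γ, γ ≠ s2 → c'.content γ = c.content γ := fun γ hγ =>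
      Function.update_of_ne hγ _ _
    have hc2eq' : c'.content s2 = c.content s2 ∪ c.proj s1 :=
      Function.update_self _ _ _
    have hc2eq : c'.content s2 = c.proj s2 ∪ c.proj s1 := by
      rw [hc2eq', hi.openProj s2 hs2]
    have hprojne : ∀ x, x ≠ s2 → c'.proj x = c.proj x := fun x hx =>
      proj_g1 H1 H2 H3 H4 hx
    have hmemnew : (s2, lbl, s1) ∈ c'.arcs := Set.mem_insert _ _
    have hprojs2 : c'.proj s2 = c.proj s2 ∪ c.proj s1 := by
      apply Set.Subset.antisymm
      · intro v hv
        rcases proj_g2 H2 H3 H4 hv with hφ | ⟨l, z, hz, hvz⟩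
        · rwa [hc2eq] at hφ
        · rcases Set.mem_insert_iff.mp hz with he | hold
          · simp only [Prod.mk.injEq] at he
            rw [he.2.2] at hvz
            exact Or.inr hvz
          · exact Or.inl (projOf_subset_of_reach (ReflTransGen.single ⟨l, hold⟩) hvz)
      · apply Set.union_subset
        · rw [← hi.openProj s2 hs2]
          intro v hv
          have : v ∈ c'.content s2 := by rw [hc2eq']; exact Or.inl hv
          exact content_subset_projOf _ _ _ this
        · exact proj_g3 H1 H3 H4 hmemnew
    constructor
    · exact hnd'
    · intro x hx; exact hi.act_mem x ((hact x).mpr (Or.inr hx))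
    · intro a l b h
      rcases Set.mem_insert_iff.mp h with he | hold
      · simp only [Prod.mk.injEq] at he
        rw [he.1, he.2.2]
        exact ⟨hs2B, hs1B⟩
      · exact hi.arcs_mem a l b hold
    · intro x hx a l hC
      rcases Set.mem_insert_iff.mp hC with he | hold
      · simp only [Prod.mk.injEq] at he
        exact hs1new (he.2.2 ▸ hx)
      · exact hi.act_root x ((hact x).mpr (Or.inr hx)) a l hold
    · intro x hx y hy hxy v hvx hvy
      have hxold := (hact x).mpr (Or.inr hx)
      have hyold := (hact y).mpr (Or.inr hy)
      have hxs : x ≠ s1 := fun he => hs1new (he ▸ hx)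
      have hys : y ≠ s1 := fun he => hs1new (he ▸ hy)
      by_cases hxh : x = s2
      · subst hxh
        rw [hprojs2] at hvx
        rw [hprojne y (fun he => hxy he.symm)] at hvy
        rcases hvx with hvx | hvx
        · exact hi.act_disj x hxold y hyold hxy v hvx hvy
        · exact hi.act_disj s1 hs1old y hyold (fun he => hys he.symm) v hvx hvy
      · rw [hprojne x hxh] at hvx
        by_cases hyh : y = s2
        · subst hyh
          rw [hprojs2] at hvy
          rcases hvy with hvy | hvy
          · exact hi.act_disj x hxold y hyold hxy v hvx hvy
          · exact hi.act_disj x hxold s1 hs1old hxs v hvx hvy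
        · rw [hprojne y hyh] at hvy
          exact hi.act_disj x hxold y hyold hxy v hvx hvy
    · intro γ hγ
      obtain ⟨x, hx, hr⟩ := hi.covered γ hγ
      rcases (hact x).mp hx with rfl | hx'
      · exact ⟨s2, hs2new, ReflTransGen.head ⟨lbl, hmemnew⟩ (reach_mono H1 hr)⟩
      · exact ⟨x, hx', reach_mono H1 hr⟩
    · intro γ hγ
      by_cases hγ2 : γ = s2
      · obtain ⟨v, hv⟩ := hi.nonemp s2 hs2B
        exact ⟨v, by rw [hγ2, hc2eq']; exact Or.inl hv⟩
      · rw [H4 γ hγ2]; exact hi.nonemp γ hγ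
    · intro α1 h1 α2 h2 hsub
      by_cases h1s : α1 = s2
      · rw [h1s]
        by_cases h2s : α2 = s2
        · rw [h2s]
        · rw [h1s, H4 α2 h2s, hc2eq] at hsub
          obtain ⟨x, hx, hr⟩ := hi.covered α2 h2
          obtain ⟨v, hv⟩ := hi.nonemp α2 h2
          have hvx : v ∈ c.proj x := content_subset_projOf_of_reach hr hv
          rcases hsub hv with hvs | hvs
          · have hxeq : x = s2 := by
              by_contra hne'
              exact hi.act_disj x hx s2 hs2old hne' v hvx hvs
            rw [hxeq] at hr
            exact reach_mono H1 hr
          · have hxeq : x = s1 := by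
              by_contra hne'
              exact hi.act_disj x hx s1 hs1old hne' v hvx hvs
            rw [hxeq] at hr
            exact ReflTransGen.head ⟨lbl, hmemnew⟩ (reach_mono H1 hr)
      · by_cases h2s : α2 = s2
        · rw [h2s]
          have hsub' : c.content s2 ⊆ c.content α1 := by
            intro v hv
            have hv' : v ∈ c'.content α2 := by rw [h2s, hc2eq']; exact Or.inl hv
            have := hsub hv'
            rwa [H4 α1 h1s] at this
          exact reach_mono H1 (hi.contain α1 h1 s2 hs2B hsub')
        · rw [H4 α1 h1s, H4 α2 h2s] at hsub
          exact reach_mono H1 (hi.contain α1 h1 α2 h2 hsub)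
    · exact hi.openSub
    · intro γ hγ
      by_cases hγ2 : γ = s2
      · rw [hγ2, hc2eq, hprojs2]
      · rw [H4 γ hγ2, hprojne γ hγ2]
        exact hi.openProj γ hγ

theorem inv_reachable {conj : L} {c : Config n L} (h : Reachable conj c) : BHInv c := by
  induction h with
  | refl => exact inv_init
  | tail _ hstep ih => exact inv_step hstep ih

end ContainmentProof

/-- **(Containment invariant)** In every reachable configuration, if the content
of one bubble is strictly contained in the content of another, then the former
is reachable from the latter via arcs. -/
theorem containment_invariant (n : ℕ) (L : Type*) [Fintype L] (conj : L)
    (c : Config n L) (hreach : Reachable conj c) :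
    ∀ α1 ∈ c.bubbles, ∀ α2 ∈ c.bubbles,
      c.content α2 ⊂ c.content α1 →
      Relation.ReflTransGen (ArcRel c.arcs) α1 α2 := by
  intro α1 h1 α2 h2 hsub
  exact (inv_reachable hreach).contain α1 h1 α2 h2 hsub.le
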